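/- Let N be a binomial random variable with M trials and success probability p, with Mp ≥ 1. Then for any t ∈ (0,1], E[N^t] ≤ (Mp)^t + Mp; in particular E[N^t] ≤ 2·max{(Mp)^t, Mp}. -/

import Mathlib

/-! For `0 < t ≤ 1` every natural number satisfies `k ^ t ≤ k`, so `E[N ^ t] ≤ E[N] = M p`, the
binomial mean, which is read off Mathlib's identity `∑ ν • bernsteinPolynomial n ν = n • X`. -/

open Finset Polynomial

theorem sum_range_choose_mul_pow_mul_one_sub_pow_mul_cast {R : Type*} [CommRing R] (n : ℕ)
    (p : R) :
    ∑ k ∈ range (n + 1), (n.choose k : R) * p ^ k * (1 - p) ^ (n - k) * k = n * p := by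
  have h := congrArg (eval p) (bernsteinPolynomial.sum_smul (R := R) n)
  simp only [eval_finsetSum, eval_X, bernsteinPolynomial, eval_mul, eval_pow,
    eval_sub, eval_one, eval_natCast, nsmul_eq_mul] at h
  rw [← h]
  exact sum_congr rfl fun k _ => mul_comm _ _

theorem Nat.cast_rpow_le_self (k : ℕ) {t : ℝ} (ht0 : 0 < t) (ht1 : t ≤ 1) :
    (k : ℝ) ^ t ≤ k := by
  rcases k.eq_zero_or_pos with rfl | hk
  · simp [Real.zero_rpow ht0.ne']
  · exact Real.rpow_le_self_of_one_le (by exact_mod_cast hk) ht1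

theorem sum_range_choose_mul_pow_mul_one_sub_pow_mul_rpow_le (n : ℕ) {p : ℝ} (hp0 : 0 ≤ p)
    (hp1 : p ≤ 1) {t : ℝ} (ht0 : 0 < t) (ht1 : t ≤ 1) :
    ∑ k ∈ range (n + 1), (n.choose k : ℝ) * p ^ k * (1 - p) ^ (n - k) * (k : ℝ) ^ t
      ≤ n * p := by
  have hq : 0 ≤ 1 - p := sub_nonneg.mpr hp1
  rw [← sum_range_choose_mul_pow_mul_one_sub_pow_mul_cast]
  gcongr with k
  exact k.cast_rpow_le_self ht0 ht1

theorem stmt4_general (M : ℕ) (p : ℝ) (hp0 : 0 ≤ p) (hp1 : p ≤ 1)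
    (t : ℝ) (ht0 : 0 < t) (ht1 : t ≤ 1) :
    (∑ k ∈ Finset.range (M + 1),
        (M.choose k : ℝ) * p ^ k * (1 - p) ^ (M - k) * (k : ℝ) ^ t)
      ≤ ((M : ℝ) * p) ^ t + (M : ℝ) * p ∧
    (∑ k ∈ Finset.range (M + 1),
        (M.choose k : ℝ) * p ^ k * (1 - p) ^ (M - k) * (k : ℝ) ^ t)
      ≤ 2 * max (((M : ℝ) * p) ^ t) ((M : ℝ) * p) := by
  have hmoment := sum_range_choose_mul_pow_mul_one_sub_pow_mul_rpow_le M hp0 hp1 ht0 ht1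
  have hpow : 0 ≤ ((M : ℝ) * p) ^ t := Real.rpow_nonneg (by positivity) t
  have hmax := le_max_right (((M : ℝ) * p) ^ t) ((M : ℝ) * p)
  have hmax_nonneg := hpow.trans (le_max_left (((M : ℝ) * p) ^ t) ((M : ℝ) * p))
  constructor <;> linarith

/-- For `N ~ Binomial(M, p)` with `M·p ≥ 1` and `t ∈ (0,1]`,
`E[N^t] ≤ (Mp)^t + Mp`, and in particular `E[N^t] ≤ 2·max{(Mp)^t, Mp}`. -/
theorem stmt4 (M : ℕ) (hM : 0 < M) (p : ℝ) (hp0 : 0 ≤ p) (hp1 : p ≤ 1)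
    (hMp : 1 ≤ (M : ℝ) * p) (t : ℝ) (ht0 : 0 < t) (ht1 : t ≤ 1) :
    (∑ k ∈ Finset.range (M + 1),
        (M.choose k : ℝ) * p ^ k * (1 - p) ^ (M - k) * (k : ℝ) ^ t)
      ≤ ((M : ℝ) * p) ^ t + (M : ℝ) * p ∧
    (∑ k ∈ Finset.range (M + 1),
        (M.choose k : ℝ) * p ^ k * (1 - p) ^ (M - k) * (k : ℝ) ^ t)
      ≤ 2 * max (((M : ℝ) * p) ^ t) ((M : ℝ) * p) :=
  stmt4_general M p hp0 hp1 t ht0 ht1
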